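/- arXiv:math/0503391 — 4 statements merged into one kernel-verified Lean document; each statement's English description precedes it below -/
import Mathlib

section
/- Let H be a separable Hilbert space, A a bounded self-adjoint operator on H, and {j_α}_{α∈S} a countable family of bounded self-adjoint operators with ∑_α j_α² = 1 (convergence in the weak operator topology). Then for every φ ∈ H, ∑_α ‖A j_α φ‖² ≤ 2‖Aφ‖² + ⟨φ, Cφ⟩, where C = 2 ∑_α (−[A, j_α]²). -/
open scoped InnerProductSpace

/-!
Write `B α = A j_α - j_α A`, so that `A j_α φ = j_α A φ + B_α φ` and hence
`‖A j_α φ‖² ≤ 2‖j_α A φ‖² + 2‖B_α φ‖²`. Summing over `α`, the first terms add up to `‖Aφ‖²`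
by the partition of unity, and, since `B_α` is skew-adjoint, `‖B_α φ‖² = ⟨φ, -B_α² φ⟩`, so the
second terms add up to `⟨φ, Cφ⟩`.
-/

theorem IsSelfAdjoint.star_mul_sub_mul {R : Type*} [Ring R] [StarRing R] {a b : R}
    (ha : IsSelfAdjoint a) (hb : IsSelfAdjoint b) : star (a * b - b * a) = -(a * b - b * a) := by
  rw [star_sub, star_mul, star_mul, ha.star_eq, hb.star_eq, neg_sub]

section

variable {𝕜 H : Type*} [RCLike 𝕜] [NormedAddCommGroup H] [InnerProductSpace 𝕜 H] [CompleteSpace H]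

theorem ContinuousLinearMap.inner_star_mul_self_apply (T : H →L[𝕜] H) (x : H) :
    ⟪x, (star T * T) x⟫_𝕜 = (‖T x‖ : 𝕜) ^ 2 := by
  rw [← inner_self_eq_norm_sq_to_K]
  exact T.adjoint_inner_right x (T x)

theorem hasSum_norm_sq_of_hasSum_inner_star_mul_self {ι : Type*} {T : ι → H →L[𝕜] H} {x : H}
    {s : 𝕜} (h : HasSum (fun i => ⟪x, (star (T i) * T i) x⟫_𝕜) s) :
    HasSum (fun i => ‖T i x‖ ^ 2) (RCLike.re s) := by
  simp only [ContinuousLinearMap.inner_star_mul_self_apply] at h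
  simpa using h.mapL RCLike.reCLM

end

theorem stmt0_general {H : Type*} [NormedAddCommGroup H] [InnerProductSpace ℂ H] [CompleteSpace H]
    {S : Type*}
    (A : H →L[ℂ] H) (hA : IsSelfAdjoint A)
    (j : S → H →L[ℂ] H) (hj : ∀ α, IsSelfAdjoint (j α))
    (hpart : ∀ x y : H, HasSum (fun α => ⟪x, ((j α) * (j α)) y⟫_ℂ) ⟪x, y⟫_ℂ)
    (C : H →L[ℂ] H)
    (hC : ∀ x : H,
      HasSum (fun α => (2 : ℂ) * ⟪x, (-((A * j α - j α * A) * (A * j α - j α * A))) x⟫_ℂ)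
        ⟪x, C x⟫_ℂ)
    (φ : H) :
    ∑' α, ‖A ((j α) φ)‖ ^ 2 ≤ 2 * ‖A φ‖ ^ 2 + (⟪φ, C φ⟫_ℂ).re := by
  have hB : ∀ α, -((A * j α - j α * A) * (A * j α - j α * A)) =
      star (A * j α - j α * A) * (A * j α - j α * A) := fun α => by
    rw [hA.star_mul_sub_mul (hj α), neg_mul]
  have hjA : HasSum (fun α => ‖j α (A φ)‖ ^ 2) (‖A φ‖ ^ 2) := by
    have := hasSum_norm_sq_of_hasSum_inner_star_mul_self (T := j) (x := A φ)
      (by simpa only [(hj _).star_eq] using hpart (A φ) (A φ))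
    rwa [inner_self_eq_norm_sq] at this
  set B : S → H →L[ℂ] H := fun α => A * j α - j α * A
  have hBφ : HasSum (fun α => 2 * ‖B α φ‖ ^ 2) (⟪φ, C φ⟫_ℂ).re := by
    have := hasSum_norm_sq_of_hasSum_inner_star_mul_self (T := B) (x := φ)
      (by simpa only [hB, mul_div_cancel_left₀ _ (two_ne_zero (α := ℂ))] using (hC φ).div_const 2)
    rwa [RCLike.re_to_complex, Complex.div_ofNat_re, ← hasSum_mul_left_iff two_ne_zero,
      mul_div_cancel₀ _ two_ne_zero] at this
  have hsplit : ∀ α, ‖A (j α φ)‖ ^ 2 ≤ 2 * ‖j α (A φ)‖ ^ 2 + 2 * ‖B α φ‖ ^ 2 := fun α => by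
    have : A (j α φ) = j α (A φ) + B α φ := by simp [B]
    rw [this, ← mul_add]
    exact (pow_le_pow_left₀ (norm_nonneg _) (norm_add_le _ _) 2).trans add_sq_le
  have hmajorant := (hjA.mul_left 2).add hBφ
  exact hasSum_le hsplit
    (Summable.of_nonneg_of_le (fun _ => sq_nonneg _) hsplit hmajorant.summable).hasSum hmajorant

/-- **Localization estimate** (Last–Simon, Proposition 2.1).  Let `H` be a separable Hilbert
space, `A` a bounded self-adjoint operator, and `{j α}` a countable family of bounded
self-adjoint operators forming a partition of unity, `∑ α, (j α)² = 1`, weakly.  Let `C` be the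
(bounded) operator with quadratic form `⟨φ, C φ⟩ = 2 ∑ α ⟨φ, (-[A, j α]²) φ⟩`.  Then for every
`φ`, `∑ α ‖A (j α φ)‖² ≤ 2‖Aφ‖² + ⟨φ, Cφ⟩`. -/
theorem stmt0 {H : Type*} [NormedAddCommGroup H] [InnerProductSpace ℂ H] [CompleteSpace H]
    [TopologicalSpace.SeparableSpace H] {S : Type*} [Countable S]
    (A : H →L[ℂ] H) (hA : IsSelfAdjoint A)
    (j : S → H →L[ℂ] H) (hj : ∀ α, IsSelfAdjoint (j α))
    (hpart : ∀ x y : H, HasSum (fun α => ⟪x, ((j α) * (j α)) y⟫_ℂ) ⟪x, y⟫_ℂ)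
    (C : H →L[ℂ] H)
    (hC : ∀ x : H,
      HasSum (fun α => (2 : ℂ) * ⟪x, (-((A * j α - j α * A) * (A * j α - j α * A))) x⟫_ℂ)
        ⟪x, C x⟫_ℂ)
    (φ : H) :
    ∑' α, ‖A ((j α) φ)‖ ^ 2 ≤ 2 * ‖A φ‖ ^ 2 + (⟪φ, C φ⟫_ℂ).re :=
  stmt0_general A hA j hj hpart C hC φ
end

section
/- Under the assumptions of the localization inequality (bounded self-adjoint A, partition of unity {j_α} with ∑ j_α² = 1, C = 2∑_α(−[A,j_α]²) bounded), for every nonzero φ ∈ H there exists an index α with j_α φ ≠ 0 and ‖A j_α φ‖² ≤ (2‖Aφ‖²/‖φ‖² + ‖C‖) ‖j_α φ‖². -/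
open scoped InnerProductSpace

/-- **Localization estimate, pointwise form** (Last–Simon, Theorem 2.2).  Under the assumptions
of the localization inequality (bounded self-adjoint `A`, countable partition of unity `{j α}`
of bounded self-adjoint operators with `∑ (j α)² = 1` weakly, and `C = 2∑ α (-[A, j α]²)`
bounded), for every nonzero `φ` there is an index `α` with `j α φ ≠ 0` and
`‖A (j α φ)‖² ≤ (2‖Aφ‖²/‖φ‖² + ‖C‖) ‖j α φ‖²`. -/
theorem stmt1 {H : Type*} [NormedAddCommGroup H] [InnerProductSpace ℂ H] [CompleteSpace H]
    [TopologicalSpace.SeparableSpace H] {S : Type*} [Countable S]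
    (A : H →L[ℂ] H) (hA : IsSelfAdjoint A)
    (j : S → H →L[ℂ] H) (hj : ∀ α, IsSelfAdjoint (j α))
    (hpart : ∀ x y : H, HasSum (fun α => ⟪x, ((j α) * (j α)) y⟫_ℂ) ⟪x, y⟫_ℂ)
    (C : H →L[ℂ] H)
    (hC : ∀ x : H,
      HasSum (fun α => (2 : ℂ) * ⟪x, (-((A * j α - j α * A) * (A * j α - j α * A))) x⟫_ℂ)
        ⟪x, C x⟫_ℂ)
    (φ : H) (hφ : φ ≠ 0) :
    ∃ α, (j α) φ ≠ 0 ∧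
      ‖A ((j α) φ)‖ ^ 2 ≤ (2 * ‖A φ‖ ^ 2 / ‖φ‖ ^ 2 + ‖C‖) * ‖(j α) φ‖ ^ 2 := by
  have hAsym := hA.isSymmetric
  have hjsym : ∀ α, (j α : H →ₗ[ℂ] H).IsSymmetric := fun α => (hj α).isSymmetric
  -- partition of unity norm identity
  have hpart' : ∀ ψ : H, HasSum (fun α => ‖(j α) ψ‖ ^ 2) (‖ψ‖ ^ 2) := by
    intro ψ
    have h1 := hpart ψ ψ
    have h2 : ∀ α, ⟪ψ, ((j α) * (j α)) ψ⟫_ℂ = ((‖(j α) ψ‖ ^ 2 : ℝ) : ℂ) := by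
      intro α
      rw [show ((j α) * (j α)) ψ = (j α) ((j α) ψ) from rfl, ← (hjsym α).apply_clm,
        inner_self_eq_norm_sq_to_K]
      norm_cast
    rw [inner_self_eq_norm_sq_to_K] at h1
    simp only [h2] at h1
    have h1' : HasSum (fun α => ((‖(j α) ψ‖ ^ 2 : ℝ) : ℂ)) ((‖ψ‖ ^ 2 : ℝ) : ℂ) := by
      convert h1 using 1
      norm_cast
    exact Complex.hasSum_ofReal.mp h1'
  -- commutator B α
  set B : S → H →L[ℂ] H := fun α => A * j α - j α * A with hB
  -- C sum identity
  have hC' : HasSum (fun α => 2 * ‖(B α) φ‖ ^ 2) (⟪φ, C φ⟫_ℂ).re := by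
    have h1 := hC φ
    have h2 : ∀ α, (2 : ℂ) * ⟪φ, (-((B α) * (B α))) φ⟫_ℂ = ((2 * ‖(B α) φ‖ ^ 2 : ℝ) : ℂ) := by
      intro α
      have hskew : ∀ y : H, ⟪φ, (B α) y⟫_ℂ = - ⟪(B α) φ, y⟫_ℂ := by
        intro y
        simp only [hB, ContinuousLinearMap.sub_apply, ContinuousLinearMap.mul_apply,
          inner_sub_left, inner_sub_right]
        rw [← hAsym.apply_clm φ ((j α) y), ← (hjsym α).apply_clm (A φ) y,
          ← (hjsym α).apply_clm φ (A y), ← hAsym.apply_clm ((j α) φ) y]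
        ring
      have : ⟪φ, (-((B α) * (B α))) φ⟫_ℂ = ⟪(B α) φ, (B α) φ⟫_ℂ := by
        rw [show (-((B α) * (B α))) φ = -((B α) ((B α) φ)) from rfl, inner_neg_right,
          hskew ((B α) φ), neg_neg]
      have hx : ⟪(B α) φ, (B α) φ⟫_ℂ = ((‖(B α) φ‖ ^ 2 : ℝ) : ℂ) := by
        rw [inner_self_eq_norm_sq_to_K]; norm_cast
      rw [this, hx]
      push_cast
      ring
    have h1 : HasSum (fun α => (2:ℂ) * ⟪φ, (-((B α) * (B α))) φ⟫_ℂ) ⟪φ, C φ⟫_ℂ := h1; simp only [h2] at h1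
    have h3 := h1.mapL Complex.reCLM
    simpa only [Complex.reCLM_apply, Complex.ofReal_re] using h3
  -- pointwise bound
  have hpw : ∀ α, ‖A ((j α) φ)‖ ^ 2 ≤ 2 * ‖(j α) (A φ)‖ ^ 2 + 2 * ‖(B α) φ‖ ^ 2 := by
    intro α
    have heq : A ((j α) φ) = (j α) (A φ) + (B α) φ := by
      simp [hB, ContinuousLinearMap.sub_apply, ContinuousLinearMap.mul_apply]
    have htri : ‖A ((j α) φ)‖ ≤ ‖(j α) (A φ)‖ + ‖(B α) φ‖ := by
      rw [heq]; exact norm_add_le _ _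
    nlinarith [norm_nonneg (A ((j α) φ)), norm_nonneg ((j α) (A φ)), norm_nonneg ((B α) φ),
      sq_nonneg (‖(j α) (A φ)‖ - ‖(B α) φ‖)]
  -- sum of the dominating family
  have hg : HasSum (fun α => 2 * ‖(j α) (A φ)‖ ^ 2 + 2 * ‖(B α) φ‖ ^ 2)
      (2 * ‖A φ‖ ^ 2 + (⟪φ, C φ⟫_ℂ).re) :=
    (((hpart' (A φ)).mul_left 2)).add hC'
  have hfsummable : Summable (fun α => ‖A ((j α) φ)‖ ^ 2) :=
    Summable.of_nonneg_of_le (fun α => by positivity) hpw hg.summable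
  have hfsum : (∑' α, ‖A ((j α) φ)‖ ^ 2) ≤ 2 * ‖A φ‖ ^ 2 + (⟪φ, C φ⟫_ℂ).re := by
    rw [← hg.tsum_eq]
    exact Summable.tsum_le_tsum hpw hfsummable hg.summable
  -- bound re ⟪φ, Cφ⟫ ≤ ‖C‖ ‖φ‖²
  have hCbound : (⟪φ, C φ⟫_ℂ).re ≤ ‖C‖ * ‖φ‖ ^ 2 := by
    have h1 : (⟪φ, C φ⟫_ℂ).re ≤ ‖⟪φ, C φ⟫_ℂ‖ :=
      (le_abs_self _).trans (Complex.abs_re_le_norm _)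
    have h2 : ‖⟪φ, C φ⟫_ℂ‖ ≤ ‖φ‖ * ‖C φ‖ := norm_inner_le_norm _ _
    have h3 : ‖C φ‖ ≤ ‖C‖ * ‖φ‖ := C.le_opNorm φ
    nlinarith [norm_nonneg φ]
  set K := 2 * ‖A φ‖ ^ 2 / ‖φ‖ ^ 2 + ‖C‖ with hK
  have hφn : (0:ℝ) < ‖φ‖ ^ 2 := pow_pos (norm_pos_iff.mpr hφ) 2
  have hKφ : K * ‖φ‖ ^ 2 = 2 * ‖A φ‖ ^ 2 + ‖C‖ * ‖φ‖ ^ 2 := by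
    rw [hK, add_mul, div_mul_cancel₀ _ hφn.ne']
  by_contra hcon
  push_neg at hcon
  -- all terms satisfy K‖jαφ‖² ≤ ‖Ajαφ‖², strictly when jαφ ≠ 0
  have hle : ∀ α, K * ‖(j α) φ‖ ^ 2 ≤ ‖A ((j α) φ)‖ ^ 2 := by
    intro α
    by_cases h : (j α) φ = 0
    · simp [h]
    · exact (hcon α h).le
  -- exists α with j α φ ≠ 0
  obtain ⟨α₀, hα₀⟩ : ∃ α, (j α) φ ≠ 0 := by
    by_contra hall
    push_neg at hall
    have h0 := (hpart' φ).tsum_eq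
    simp only [hall, norm_zero, zero_pow two_ne_zero, tsum_zero] at h0
    exact hφn.ne' h0.symm
  have hstrict : K * ‖(j α₀) φ‖ ^ 2 < ‖A ((j α₀) φ)‖ ^ 2 := hcon α₀ hα₀
  have hKsum : HasSum (fun α => K * ‖(j α) φ‖ ^ 2) (K * ‖φ‖ ^ 2) := (hpart' φ).mul_left K
  have hlt : K * ‖φ‖ ^ 2 < ∑' α, ‖A ((j α) φ)‖ ^ 2 :=
    hasSum_lt hle hstrict hKsum hfsummable.hasSum
  have : K * ‖φ‖ ^ 2 < K * ‖φ‖ ^ 2 := by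
    calc K * ‖φ‖ ^ 2 < ∑' α, ‖A ((j α) φ)‖ ^ 2 := hlt
    _ ≤ 2 * ‖A φ‖ ^ 2 + (⟪φ, C φ⟫_ℂ).re := hfsum
    _ ≤ 2 * ‖A φ‖ ^ 2 + ‖C‖ * ‖φ‖ ^ 2 := by linarith
    _ = K * ‖φ‖ ^ 2 := hKφ.symm
  exact lt_irrefl _ this
end

section
/- Let J be a bounded self-adjoint Jacobi matrix on ℓ²(ℕ) with parameters {a_n, b_n} satisfying sup|b_n| + sup|a_n| + sup|a_n|^{-1} ≤ K, and let J^{(r)} be a right limit: a two-sided Jacobi matrix on ℓ²(ℤ) with parameters {a^{(r)}_ℓ, b^{(r)}_ℓ} such that there exists a sequence n_j → ∞ with a_{n_j+ℓ} → a^{(r)}_ℓ and b_{n_j+ℓ} → b^{(r)}_ℓ for each fixed ℓ ∈ ℤ. Then σ(J^{(r)}) ⊆ σ_ess(J). -/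
open scoped InnerProductSpace
open Filter

/-- The canonical basis vector `δ_n` of `ℓ²(ℕ)`. -/
noncomputable def deltaN (n : ℕ) : lp (fun _ : ℕ => ℂ) 2 := lp.single 2 n 1

/-- The canonical basis vector `δ_n` of `ℓ²(ℤ)`. -/
noncomputable def deltaZ (n : ℤ) : lp (fun _ : ℤ => ℂ) 2 := lp.single 2 n 1

/-- Half-line Jacobi matrix entries. -/
noncomputable def jacEntryN (a b : ℕ → ℝ) (n m : ℕ) : ℂ :=
  if m = n + 1 then (a n : ℂ) else if n = m + 1 then (a m : ℂ)
  else if n = m then (b n : ℂ) else 0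

/-- Whole-line Jacobi matrix entries. -/
noncomputable def jacEntryZ (a b : ℤ → ℝ) (n m : ℤ) : ℂ :=
  if m = n + 1 then (a n : ℂ) else if n = m + 1 then (a m : ℂ)
  else if n = m then (b n : ℂ) else 0

/-- `(ar, br)` are the parameters of a right limit of the half-line Jacobi parameters `(a, b)`:
there is a sequence `n_j → ∞` with `a_{n_j+ℓ} → ar_ℓ`, `b_{n_j+ℓ} → br_ℓ` for each `ℓ ∈ ℤ`. -/
def IsRightLimit (a b : ℕ → ℝ) (ar br : ℤ → ℝ) : Prop :=
  ∃ n : ℕ → ℕ, StrictMono n ∧ ∀ ℓ : ℤ,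
    Tendsto (fun j => a (((n j : ℤ) + ℓ).toNat)) atTop (nhds (ar ℓ)) ∧
    Tendsto (fun j => b (((n j : ℤ) + ℓ).toNat)) atTop (nhds (br ℓ))

/-- The essential spectrum: the intersection of the spectra of all compact perturbations. -/
noncomputable def essSpec {H : Type*} [NormedAddCommGroup H] [InnerProductSpace ℂ H]
    [CompleteSpace H] (A : H →L[ℂ] H) : Set ℂ :=
  ⋂ K : {K : H →L[ℂ] H // IsCompactOperator ⇑K}, spectrum ℂ (A + K.1)


set_option maxHeartbeats 1000000

lemma lp_coord {ι : Type*} [DecidableEq ι] (f : lp (fun _ : ι => ℂ) 2) (k : ι) :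
    ⟪lp.single 2 k (1:ℂ), f⟫_ℂ = f k := by
  rw [lp.inner_single_left]; simp [RCLike.inner_apply]

lemma coordT {κ ι : Type*} [DecidableEq κ]
    (T : lp (fun _ : κ => ℂ) 2 →L[ℂ] lp (fun _ : κ => ℂ) 2)
    (s : Finset ι) (f : ι → κ) (c : ι → ℂ) (k : κ) :
    (T (∑ m ∈ s, c m • lp.single 2 (f m) (1:ℂ))) k
      = ∑ m ∈ s, c m * ⟪lp.single 2 k (1:ℂ), T (lp.single 2 (f m) 1)⟫_ℂ := by
  rw [← lp_coord, map_sum, inner_sum]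
  exact Finset.sum_congr rfl fun m _ => by rw [map_smul, inner_smul_right]

lemma coordSum {κ ι : Type*} [DecidableEq κ]
    (s : Finset ι) (f : ι → κ) (c : ι → ℂ) (k : κ) :
    ((∑ m ∈ s, c m • lp.single 2 (f m) (1:ℂ) : lp (fun _ : κ => ℂ) 2)) k
      = ∑ m ∈ s, c m * (if k = f m then 1 else 0) := by
  rw [← lp_coord, inner_sum]
  refine Finset.sum_congr rfl fun m _ => ?_
  rw [inner_smul_right, lp_coord]
  by_cases h : k = f m
  · subst h; rw [lp.single_apply_self, if_pos rfl]
  · rw [lp.single_apply_ne _ _ _ h, if_neg h]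

lemma coordSum_eq {κ ι : Type*} [DecidableEq κ] [DecidableEq ι]
    (s : Finset ι) (f : ι → κ) (hf : Set.InjOn f s) (c : ι → ℂ) {ℓ : ι} (hℓ : ℓ ∈ s) :
    ((∑ m ∈ s, c m • lp.single 2 (f m) (1:ℂ) : lp (fun _ : κ => ℂ) 2)) (f ℓ) = c ℓ := by
  rw [coordSum]
  rw [Finset.sum_eq_single ℓ]
  · simp
  · intro m hm hne
    have : f ℓ ≠ f m := fun h => hne (hf hm hℓ h.symm)
    · rw [if_neg this, mul_zero]
  · intro h; exact absurd hℓ h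

lemma coordSum_ne {κ ι : Type*} [DecidableEq κ]
    (s : Finset ι) (f : ι → κ) (c : ι → ℂ) {k : κ} (hk : ∀ m ∈ s, f m ≠ k) :
    ((∑ m ∈ s, c m • lp.single 2 (f m) (1:ℂ) : lp (fun _ : κ => ℂ) 2)) k = 0 := by
  rw [coordSum]
  refine Finset.sum_eq_zero fun m hm => ?_
  rw [if_neg (fun h => hk m hm h.symm), mul_zero]

lemma norm_sq_support {ι : Type*} (f : lp (fun _ : ι => ℂ) 2) (t : Finset ι)
    (h : ∀ i ∉ t, f i = 0) : ‖f‖^2 = ∑ i ∈ t, ‖f i‖^2 := by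
  have h1 : (⟪f, f⟫_ℂ) = ∑ i ∈ t, (‖f i‖:ℂ)^2 := by
    rw [lp.inner_eq_tsum, tsum_eq_sum (s := t) (fun i hi => by simp [h i hi])]
    exact Finset.sum_congr rfl fun i _ => inner_self_eq_norm_sq_to_K (𝕜 := ℂ) (f i)
  have h2 : (⟪f, f⟫_ℂ) = (‖f‖:ℂ)^2 := inner_self_eq_norm_sq_to_K f
  have := h2.symm.trans h1
  exact_mod_cast this

lemma norm_sum_single {κ ι : Type*} [DecidableEq κ] [DecidableEq ι] (s : Finset ι) (f : ι → κ)
    (hf : Set.InjOn f s) (c : ι → ℂ) :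
    ‖(∑ m ∈ s, c m • lp.single 2 (f m) (1:ℂ) : lp (fun _ : κ => ℂ) 2)‖^2
      = ∑ m ∈ s, ‖c m‖^2 := by
  rw [norm_sq_support _ (s.image f) (fun k hk => coordSum_ne s f c
    (fun m hm h => hk (h ▸ Finset.mem_image_of_mem f hm)))]
  rw [Finset.sum_image (fun x hx y hy h => hf hx hy h)]
  exact Finset.sum_congr rfl fun m hm => by rw [coordSum_eq s f hf c hm]

lemma weak_zero (φ : ℕ → lp (fun _ : ℕ => ℂ) 2) (hbd : ∀ m, ‖φ m‖ ≤ 2)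
    (hsupp : ∀ m k, k < m → (φ m) k = 0) (v : lp (fun _ : ℕ => ℂ) 2) :
    Tendsto (fun m => ⟪v, φ m⟫_ℂ) atTop (nhds 0) := by
  set P : ℕ → lp (fun _ : ℕ => ℂ) 2 := fun m => ∑ i ∈ Finset.range m, lp.single 2 i (v i) with hP
  have hPt : Tendsto P atTop (nhds v) :=
    (lp.hasSum_single (by norm_num) v).tendsto_sum_nat
  have hzero : ∀ m, ⟪P m, φ m⟫_ℂ = 0 := by
    intro m
    rw [hP, sum_inner]
    refine Finset.sum_eq_zero fun i hi => ?_
    rw [lp.inner_single_left]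
    simp [RCLike.inner_apply, hsupp m i (Finset.mem_range.mp hi)]
  have heq : ∀ m, ⟪v, φ m⟫_ℂ = ⟪v - P m, φ m⟫_ℂ := by
    intro m
    rw [inner_sub_left, hzero, sub_zero]
  have hb : ∀ m, ‖⟪v, φ m⟫_ℂ‖ ≤ ‖v - P m‖ * 2 := by
    intro m
    rw [heq]
    calc ‖⟪v - P m, φ m⟫_ℂ‖ ≤ ‖v - P m‖ * ‖φ m‖ := norm_inner_le_norm _ _
    _ ≤ ‖v - P m‖ * 2 := by
        exact mul_le_mul_of_nonneg_left (hbd m) (norm_nonneg _)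
  have hlim : Tendsto (fun m => ‖v - P m‖ * 2) atTop (nhds 0) := by
    have : Tendsto (fun m => v - P m) atTop (nhds (v - v)) :=
      tendsto_const_nhds.sub hPt
    rw [sub_self] at this
    simpa using (this.norm.mul_const 2)
  exact squeeze_zero_norm hb hlim

lemma approx_eigen {H : Type*} [NormedAddCommGroup H] [InnerProductSpace ℂ H] [CompleteSpace H]
    (T : H →L[ℂ] H) (hT : IsSelfAdjoint T) {z : ℂ} (hz : z ∈ spectrum ℂ T) {ε : ℝ}
    (hε : 0 < ε) : ∃ u : H, ‖u‖ = 1 ∧ ‖T u - z • u‖ < ε := by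
  by_contra hcon
  push_neg at hcon
  set A : H →L[ℂ] H := T - z • 1 with hA
  have hAapp : ∀ x, A x = T x - z • x := fun x => by simp [hA]
  have hzr : z = (z.re : ℂ) := hT.mem_spectrum_eq_re hz
  have hAsa : IsSelfAdjoint A := by
    refine hT.sub ?_
    rw [IsSelfAdjoint]
    rw [star_smul, star_one]
    rw [hzr]
    norm_num
  -- lower bound
  have hlow : ∀ x : H, ε * ‖x‖ ≤ ‖A x‖ := by
    intro x
    rcases eq_or_ne x 0 with rfl | hx
    · simp
    · have hxn : ‖x‖ ≠ 0 := norm_ne_zero_iff.mpr hx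
      have h1 : ‖(‖x‖⁻¹ : ℂ) • x‖ = 1 := by
        rw [norm_smul]
        simp [norm_inv, hxn]
      have := hcon _ h1
      have h2 : T ((‖x‖⁻¹:ℂ) • x) - z • ((‖x‖⁻¹:ℂ) • x) = (‖x‖⁻¹:ℂ) • (T x - z • x) := by
        rw [map_smul, smul_comm, smul_sub]
      rw [h2, norm_smul] at this
      have h3 : ‖(‖x‖⁻¹ : ℂ)‖ = ‖x‖⁻¹ := by
        simp [norm_inv, abs_of_nonneg (norm_nonneg x)]
      rw [h3] at this
      rw [← hAapp] at this
      rw [le_inv_mul_iff₀ (by positivity)] at this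
      linarith [this]
  have hanti : AntilipschitzWith (⟨ε, hε.le⟩ : NNReal)⁻¹ A :=
    A.antilipschitz_of_bound (fun x => by
      change ‖x‖ ≤ ε⁻¹ * ‖A x‖
      rw [le_inv_mul_iff₀ (by positivity)]
      simpa [mul_comm] using hlow x)
  have hdense : A.range.topologicalClosure = ⊤ := by
    rw [Submodule.topologicalClosure_eq_top_iff]
    rw [Submodule.eq_bot_iff]
    intro v hv
    have hAv : A v = 0 := by
      have h0 : ∀ x : H, ⟪A x, v⟫_ℂ = 0 := fun x =>
        hv (A x) (LinearMap.mem_range_self _ x)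
      have h2 : ∀ x : H, ⟪A v, x⟫_ℂ = 0 := by
        intro x
        have h3 : (⟪v, A x⟫_ℂ) = 0 := by rw [← inner_conj_symm, h0 x, map_zero]
        exact (hAsa.isSymmetric v x).trans h3
      exact inner_self_eq_zero.mp (h2 (A v))
    have := hlow v
    rw [hAv, norm_zero] at this
    have : ‖v‖ ≤ 0 := by nlinarith
    exact norm_le_zero_iff.mp this
  have hbij : Function.Bijective A :=
    (ContinuousLinearMap.bijective_iff_dense_range_and_antilipschitz A).mpr
      ⟨hdense, _, hanti⟩
  have hunit : IsUnit A := ContinuousLinearMap.isUnit_iff_bijective.mpr hbij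
  rw [spectrum.mem_iff] at hz
  apply hz
  have : algebraMap ℂ (H →L[ℂ] H) z - T = -A := by
    rw [hA, Algebra.algebraMap_eq_smul_one]; abel
  rw [this]
  exact hunit.neg

lemma construct (a b : ℕ → ℝ) (ar br : ℤ → ℝ)
    (hlim : IsRightLimit a b ar br)
    (J : lp (fun _ : ℕ => ℂ) 2 →L[ℂ] lp (fun _ : ℕ => ℂ) 2)
    (hJ : ∀ n m, ⟪lp.single 2 n (1:ℂ), J (lp.single 2 m 1)⟫_ℂ = jacEntryN a b n m)
    (Jr : lp (fun _ : ℤ => ℂ) 2 →L[ℂ] lp (fun _ : ℤ => ℂ) 2)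
    (hJrsa : IsSelfAdjoint Jr)
    (hJr : ∀ n m, ⟪lp.single 2 n (1:ℂ), Jr (lp.single 2 m 1)⟫_ℂ = jacEntryZ ar br n m)
    {z : ℂ} (hz : z ∈ spectrum ℂ Jr) :
    ∀ ε : ℝ, 0 < ε → ∀ M : ℕ, ∃ φ : lp (fun _ : ℕ => ℂ) 2,
      1/2 ≤ ‖φ‖ ∧ ‖φ‖ ≤ 2 ∧ ‖J φ - z • φ‖ ≤ ε ∧ ∀ k < M, φ k = 0 := by
  intro ε hε M
  obtain ⟨nj, hmono, hconv⟩ := hlim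
  have hε3 : 0 < ε/3 := by linarith
  obtain ⟨u, hu1, huε⟩ := approx_eigen Jr hJrsa hz hε3
  -- truncation
  set δ₂ : ℝ := min (1/2) ((ε/3)/(‖Jr‖ + ‖z‖ + 1)) with hδ₂def
  have hδ₂pos : 0 < δ₂ := by
    apply lt_min (by norm_num)
    apply div_pos hε3
    positivity
  have hS := lp.hasSum_single (E := fun _ : ℤ => ℂ) (by norm_num) u
  obtain ⟨s, hs⟩ := ((Metric.tendsto_nhds.mp hS) δ₂ hδ₂pos).exists
  rw [dist_eq_norm] at hs
  set w : lp (fun _ : ℤ => ℂ) 2 := ∑ i ∈ s, (u i) • lp.single 2 i (1:ℂ) with hwdef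
  have hweq : w = ∑ i ∈ s, lp.single 2 i (u i) := by
    refine Finset.sum_congr rfl fun i _ => ?_
    rw [← lp.single_smul]
    norm_num
  have hwu : ‖w - u‖ < δ₂ := by rw [hweq]; exact hs
  have hwn1 : 1/2 ≤ ‖w‖ := by
    have h1 : |‖w‖ - ‖u‖| ≤ ‖w - u‖ := abs_norm_sub_norm_le w u
    have h3 : δ₂ ≤ 1/2 := min_le_left _ _
    rw [hu1] at h1
    rw [abs_le] at h1
    linarith [h1.1, hwu]
  have hwn2 : ‖w‖ ≤ 2 := by
    have h1 : |‖w‖ - ‖u‖| ≤ ‖w - u‖ := abs_norm_sub_norm_le w u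
    have h3 : δ₂ ≤ 1/2 := min_le_left _ _
    rw [hu1] at h1
    rw [abs_le] at h1
    linarith [h1.2, hwu]
  have hAzw : ‖Jr w - z • w‖ ≤ 2*(ε/3) := by
    have hsplit : Jr w - z • w = (Jr u - z • u) + (Jr (w-u) - z • (w-u)) := by
      rw [map_sub, smul_sub]; abel
    have h1 : ‖Jr (w-u) - z • (w-u)‖ ≤ (‖Jr‖ + ‖z‖) * ‖w - u‖ := by
      calc ‖Jr (w-u) - z • (w-u)‖ ≤ ‖Jr (w-u)‖ + ‖z • (w-u)‖ := norm_sub_le _ _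
      _ ≤ ‖Jr‖ * ‖w-u‖ + ‖z‖ * ‖w-u‖ := by
          gcongr
          · exact Jr.le_opNorm _
          · rw [norm_smul]
      _ = (‖Jr‖ + ‖z‖) * ‖w - u‖ := by ring
    have h2 : (‖Jr‖ + ‖z‖) * ‖w - u‖ ≤ ε/3 := by
      have h3 : δ₂ ≤ (ε/3)/(‖Jr‖ + ‖z‖ + 1) := min_le_right _ _
      have h4 : 0 ≤ ‖Jr‖ + ‖z‖ := by positivity
      have h5 : ‖w - u‖ ≤ (ε/3)/(‖Jr‖ + ‖z‖ + 1) := le_trans hwu.le h3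
      have h6 : (‖Jr‖ + ‖z‖) * ‖w - u‖ ≤ (‖Jr‖ + ‖z‖) * ((ε/3)/(‖Jr‖ + ‖z‖ + 1)) := by
        gcongr
      refine le_trans h6 ?_
      rw [mul_div_assoc']
      rw [div_le_iff₀ (by positivity)]
      nlinarith [hε3]
    calc ‖Jr w - z • w‖ ≤ ‖Jr u - z • u‖ + ‖Jr (w-u) - z • (w-u)‖ := by
          rw [hsplit]; exact norm_add_le _ _
    _ ≤ ε/3 + ε/3 := by
        refine add_le_add huε.le (le_trans h1 h2)
    _ = 2*(ε/3) := by ring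
  -- finsets
  classical
  set t : Finset ℤ := s ∪ s.image (· + 1) ∪ s.image (· - 1) with htdef
  set t₂ : Finset ℤ := t ∪ t.image (· + 1) ∪ t.image (· - 1) with ht₂def
  have hst : s ⊆ t := fun x hx => Finset.mem_union_left _ (Finset.mem_union_left _ hx)
  have htt₂ : t ⊆ t₂ := fun x hx => Finset.mem_union_left _ (Finset.mem_union_left _ hx)
  have hJrw : ∀ i : ℤ, (Jr w) i = ∑ m ∈ s, u m * jacEntryZ ar br i m := by
    intro i
    rw [hwdef]
    rw [coordT Jr s (fun x => x) (fun m => u m) i]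
    exact Finset.sum_congr rfl fun m _ => by rw [hJr]
  have hwcoord : ∀ i : ℤ, w i = if i ∈ s then u i else 0 := by
    intro i
    by_cases hi : i ∈ s
    · rw [if_pos hi, hwdef]
      exact coordSum_eq s (fun x => x) (fun x _ y _ h => h) (fun m => u m) hi
    · rw [if_neg hi, hwdef]
      exact coordSum_ne s (fun x => x) (fun m => u m) (fun m hm h => hi (h ▸ hm))
  have hgcoord : ∀ i : ℤ, ((Jr w - z • w) : lp (fun _ : ℤ => ℂ) 2) i
      = (Jr w) i - z * (w i) := by
    intro i
    simp [lp.coeFn_sub, lp.coeFn_smul, Pi.sub_apply, Pi.smul_apply, smul_eq_mul]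
    rfl
  have hgsupp : ∀ i ∉ t, ((Jr w - z • w) : lp (fun _ : ℤ => ℂ) 2) i = 0 := by
    intro i hi
    rw [hgcoord, hJrw]
    have hwz : w i = 0 := by rw [hwcoord, if_neg (fun h => hi (hst h))]
    rw [hwz, mul_zero, sub_zero]
    refine Finset.sum_eq_zero fun m hm => ?_
    rw [jacEntryZ]
    have h1 : ¬ m = i + 1 := fun h =>
      hi (Finset.mem_union_right _ (Finset.mem_image.mpr ⟨m, hm, by omega⟩))
    have h2 : ¬ i = m + 1 := fun h =>
      hi (Finset.mem_union_left _ (Finset.mem_union_right _ (Finset.mem_image.mpr ⟨m, hm, by omega⟩)))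
    have h3 : ¬ i = m := fun h => hi (hst (h ▸ hm))
    rw [if_neg h1, if_neg h2, if_neg h3, mul_zero]
  -- constants
  set U : ℝ := ∑ m ∈ s, ‖(u m : ℂ)‖ with hUdef
  have hU0 : 0 ≤ U := Finset.sum_nonneg fun m _ => norm_nonneg _
  set δ₃ : ℝ := (ε/3) / (((t₂.card : ℝ) + 1) * (U + 1)) with hδ₃def
  have hδ₃pos : 0 < δ₃ := by
    apply div_pos hε3
    have h1 : (0:ℝ) ≤ (t₂.card : ℝ) := Nat.cast_nonneg _
    nlinarith [hU0]
  -- choose j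
  have hEa : ∀ᶠ j in atTop, ∀ ℓ ∈ t₂, ((M:ℤ)+1 ≤ (nj j : ℤ) + ℓ ∧
      |a (((nj j:ℤ)+ℓ).toNat) - ar ℓ| ≤ δ₃ ∧ |b (((nj j:ℤ)+ℓ).toNat) - br ℓ| ≤ δ₃) := by
    rw [Filter.eventually_all_finset]
    intro ℓ _
    have h1 : Tendsto (fun j => (nj j : ℤ) + ℓ) atTop atTop := by
      apply tendsto_atTop_add_const_right
      exact tendsto_natCast_atTop_atTop.comp hmono.tendsto_atTop
    filter_upwards [h1.eventually_ge_atTop ((M:ℤ)+1),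
      (Metric.tendsto_nhds.mp (hconv ℓ).1) δ₃ hδ₃pos,
      (Metric.tendsto_nhds.mp (hconv ℓ).2) δ₃ hδ₃pos] with j hj1 hj2 hj3
    rw [Real.dist_eq] at hj2 hj3
    exact ⟨hj1, hj2.le, hj3.le⟩
  obtain ⟨j, hj⟩ := hEa.exists
  set F : ℤ → ℕ := fun ℓ : ℤ => ((nj j : ℤ) + ℓ).toNat with hFdef
  have hFcast : ∀ ℓ ∈ t₂, ((F ℓ : ℕ) : ℤ) = (nj j:ℤ) + ℓ := fun ℓ hℓ =>
    Int.toNat_of_nonneg (by have := (hj ℓ hℓ).1; omega)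
  have hFM : ∀ ℓ ∈ t₂, M < F ℓ := by
    intro ℓ hℓ
    have h1 := hFcast ℓ hℓ
    have h2 := (hj ℓ hℓ).1
    omega
  have hFinj : Set.InjOn F t₂ := by
    intro x hx y hy h
    have hx' := hFcast x hx
    have hy' := hFcast y hy
    have : ((F x : ℕ) : ℤ) = ((F y : ℕ) : ℤ) := by exact_mod_cast congrArg (Nat.cast (R := ℤ)) h
    omega
  have hsinj : Set.InjOn F s := hFinj.mono (fun x hx => htt₂ (hst hx))
  have htinj : Set.InjOn F t := hFinj.mono (fun x hx => htt₂ hx)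
  -- entry comparison
  have hentry : ∀ ℓ ∈ t₂, ∀ m ∈ s, ‖jacEntryN a b (F ℓ) (F m) - jacEntryZ ar br ℓ m‖ ≤ δ₃ := by
    intro ℓ hℓ m hm
    have hmt₂ : m ∈ t₂ := htt₂ (hst hm)
    have hcℓ := hFcast ℓ hℓ
    have hcm := hFcast m hmt₂
    have e1 : (F m = F ℓ + 1) ↔ (m = ℓ + 1) := by omega
    have e2 : (F ℓ = F m + 1) ↔ (ℓ = m + 1) := by omega
    have e3 : (F ℓ = F m) ↔ (ℓ = m) := by omega
    have hnormR : ∀ x y : ℝ, ‖(x:ℂ) - (y:ℂ)‖ = |x - y| := by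
      intro x y
      rw [← Complex.ofReal_sub, Complex.norm_real, Real.norm_eq_abs]
    rw [jacEntryN, jacEntryZ]
    by_cases c1 : m = ℓ + 1
    · rw [if_pos (e1.mpr c1), if_pos c1, hnormR]
      exact (hj ℓ hℓ).2.1
    · rw [if_neg (fun h => c1 (e1.mp h)), if_neg c1]
      by_cases c2 : ℓ = m + 1
      · rw [if_pos (e2.mpr c2), if_pos c2, hnormR]
        exact (hj m hmt₂).2.1
      · rw [if_neg (fun h => c2 (e2.mp h)), if_neg c2]
        by_cases c3 : ℓ = m
        · rw [if_pos (e3.mpr c3), if_pos c3, hnormR]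
          exact (hj ℓ hℓ).2.2
        · rw [if_neg (fun h => c3 (e3.mp h)), if_neg c3, sub_zero, norm_zero]
          exact hδ₃pos.le
  -- the translated vectors
  set φ : lp (fun _ : ℕ => ℂ) 2 := ∑ m ∈ s, (u m : ℂ) • lp.single 2 (F m) (1:ℂ) with hφdef
  set η : lp (fun _ : ℕ => ℂ) 2 :=
    ∑ ℓ ∈ t, (((Jr w - z • w) : lp (fun _ : ℤ => ℂ) 2) ℓ) • lp.single 2 (F ℓ) (1:ℂ) with hηdef
  have hφw : ‖φ‖ = ‖w‖ := by
    have h1 : ‖φ‖^2 = ∑ m ∈ s, ‖(u m : ℂ)‖^2 := by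
      rw [hφdef]; exact norm_sum_single s F hsinj _
    have h2 : ‖w‖^2 = ∑ m ∈ s, ‖(u m : ℂ)‖^2 := by
      rw [hwdef]; exact norm_sum_single s (fun x => x) (fun x _ y _ h => h) _
    have h3 := congrArg Real.sqrt (h1.trans h2.symm)
    rwa [Real.sqrt_sq (norm_nonneg φ), Real.sqrt_sq (norm_nonneg w)] at h3
  have hηAz : ‖η‖ = ‖Jr w - z • w‖ := by
    have h1 : ‖η‖^2 = ∑ ℓ ∈ t, ‖((Jr w - z • w) : lp (fun _ : ℤ => ℂ) 2) ℓ‖^2 := by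
      rw [hηdef]; exact norm_sum_single t F htinj _
    have h2 := norm_sq_support (Jr w - z • w) t hgsupp
    have h3 := congrArg Real.sqrt (h1.trans h2.symm)
    rwa [Real.sqrt_sq (norm_nonneg η), Real.sqrt_sq (norm_nonneg _)] at h3
  have hφM : ∀ k, k < M → φ k = 0 := by
    intro k hk
    rw [hφdef]
    exact coordSum_ne s F _ (fun m hm h => by
      have := hFM m (htt₂ (hst hm)); omega)
  -- coordinates
  have hJφ : ∀ k, (J φ) k = ∑ m ∈ s, u m * jacEntryN a b k (F m) := by
    intro k
    rw [hφdef, coordT J s F (fun m => u m) k]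
    exact Finset.sum_congr rfl fun m _ => by rw [hJ]
  have hφcoordF : ∀ ℓ ∈ t₂, φ (F ℓ) = w ℓ := by
    intro ℓ hℓ
    rw [hwcoord]
    by_cases hℓs : ℓ ∈ s
    · rw [if_pos hℓs, hφdef]
      exact coordSum_eq s F hsinj _ hℓs
    · rw [if_neg hℓs, hφdef]
      exact coordSum_ne s F _ (fun m hm h => hℓs (hFinj (htt₂ (hst hm)) hℓ h ▸ hm))
  have hφout : ∀ k, k ∉ t₂.image F → φ k = 0 := by
    intro k hk
    rw [hφdef]
    exact coordSum_ne s F _ (fun m hm h =>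
      hk (Finset.mem_image.mpr ⟨m, htt₂ (hst hm), h⟩))
  have hηcoordF : ∀ ℓ ∈ t₂, η (F ℓ) = ((Jr w - z • w) : lp (fun _ : ℤ => ℂ) 2) ℓ := by
    intro ℓ hℓ
    by_cases hℓt : ℓ ∈ t
    · rw [hηdef]
      exact coordSum_eq t F htinj _ hℓt
    · rw [hgsupp ℓ hℓt, hηdef]
      exact coordSum_ne t F _ (fun m hm h => hℓt (hFinj (htt₂ hm) hℓ h ▸ hm))
  have hηout : ∀ k, k ∉ t₂.image F → η k = 0 := by
    intro k hk
    rw [hηdef]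
    exact coordSum_ne t F _ (fun m hm h =>
      hk (Finset.mem_image.mpr ⟨m, htt₂ hm, h⟩))
  set D : lp (fun _ : ℕ => ℂ) 2 := (J φ - z • φ) - η with hDdef
  have hDcoord : ∀ k, D k = (J φ) k - z * (φ k) - η k := by
    intro k
    rw [hDdef]
    simp [lp.coeFn_sub, lp.coeFn_smul, Pi.sub_apply, Pi.smul_apply, smul_eq_mul]
    rfl
  have hDcoordF : ∀ ℓ ∈ t₂, D (F ℓ)
      = ∑ m ∈ s, u m * (jacEntryN a b (F ℓ) (F m) - jacEntryZ ar br ℓ m) := by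
    intro ℓ hℓ
    rw [hDcoord, hJφ, hφcoordF ℓ hℓ, hηcoordF ℓ hℓ, hgcoord, hJrw]
    have hr : ∑ m ∈ s, (u m : ℂ) * (jacEntryN a b (F ℓ) (F m) - jacEntryZ ar br ℓ m)
        = (∑ m ∈ s, (u m : ℂ) * jacEntryN a b (F ℓ) (F m))
          - ∑ m ∈ s, (u m : ℂ) * jacEntryZ ar br ℓ m := by
      rw [← Finset.sum_sub_distrib]
      exact Finset.sum_congr rfl fun m _ => mul_sub _ _ _
    rw [hr]
    ring
  have hDout : ∀ k, k ∉ t₂.image F → D k = 0 := by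
    intro k hk
    rw [hDcoord, hφout k hk, hηout k hk, mul_zero, sub_zero, sub_zero, hJφ]
    refine Finset.sum_eq_zero fun m hm => ?_
    have hmt : m ∈ t := hst hm
    have hm1 : m + 1 ∈ t₂ := Finset.mem_union_left _
      (Finset.mem_union_right _ (Finset.mem_image.mpr ⟨m, hmt, rfl⟩))
    have hm2 : m - 1 ∈ t₂ := Finset.mem_union_right _ (Finset.mem_image.mpr ⟨m, hmt, rfl⟩)
    have hcm := hFcast m (htt₂ hmt)
    have hcm1 := hFcast (m+1) hm1
    have hcm2 := hFcast (m-1) hm2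
    rw [jacEntryN]
    have h1 : ¬ F m = k + 1 := by
      intro h
      apply hk
      refine Finset.mem_image.mpr ⟨m - 1, hm2, ?_⟩
      omega
    have h2 : ¬ k = F m + 1 := by
      intro h
      apply hk
      refine Finset.mem_image.mpr ⟨m + 1, hm1, ?_⟩
      omega
    have h3 : ¬ k = F m := by
      intro h
      exact hk (Finset.mem_image.mpr ⟨m, htt₂ hmt, h.symm⟩)
    rw [if_neg h1, if_neg h2, if_neg h3, mul_zero]
  -- norm of D
  have hDb : ∀ ℓ ∈ t₂, ‖D (F ℓ)‖ ≤ (U + 1) * δ₃ := by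
    intro ℓ hℓ
    rw [hDcoordF ℓ hℓ]
    calc ‖∑ m ∈ s, u m * (jacEntryN a b (F ℓ) (F m) - jacEntryZ ar br ℓ m)‖
        ≤ ∑ m ∈ s, ‖u m * (jacEntryN a b (F ℓ) (F m) - jacEntryZ ar br ℓ m)‖ :=
          norm_sum_le _ _
      _ ≤ ∑ m ∈ s, ‖(u m : ℂ)‖ * δ₃ := by
          refine Finset.sum_le_sum fun m hm => ?_
          rw [norm_mul]
          exact mul_le_mul_of_nonneg_left (hentry ℓ hℓ m hm) (norm_nonneg _)
      _ = U * δ₃ := by rw [← Finset.sum_mul]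
      _ ≤ (U + 1) * δ₃ := by nlinarith [hδ₃pos]
  have hkey : (U + 1) * δ₃ = (ε/3) / ((t₂.card : ℝ) + 1) := by
    have hU1 : U + 1 ≠ 0 := by intro h; rw [← h] at hU0; linarith
    rw [hδ₃def, div_mul_eq_div_div, mul_div_assoc']
    exact mul_div_cancel_left₀ _ hU1
  have hDsq : ‖D‖^2 ≤ (t₂.card : ℝ) * ((ε/3) / ((t₂.card : ℝ) + 1))^2 := by
    rw [norm_sq_support D (t₂.image F) hDout,
      Finset.sum_image (fun x hx y hy h => hFinj hx hy h)]
    calc ∑ ℓ ∈ t₂, ‖D (F ℓ)‖^2 ≤ ∑ _ℓ ∈ t₂, ((ε/3) / ((t₂.card : ℝ) + 1))^2 := by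
          refine Finset.sum_le_sum fun ℓ hℓ => ?_
          have h := (hDb ℓ hℓ).trans hkey.le
          exact pow_le_pow_left₀ (norm_nonneg _) h 2
      _ = (t₂.card : ℝ) * ((ε/3) / ((t₂.card : ℝ) + 1))^2 := by
          rw [Finset.sum_const, nsmul_eq_mul]
  have hD3 : ‖D‖ ≤ ε/3 := by
    have hc0 : (0:ℝ) ≤ (t₂.card : ℝ) := Nat.cast_nonneg _
    have hsq : ‖D‖^2 ≤ (ε/3)^2 := by
      refine hDsq.trans ?_
      rw [div_pow, mul_div_assoc']
      rw [div_le_iff₀ (by nlinarith [hc0] : (0:ℝ) < ((t₂.card:ℝ)+1)^2)]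
      have h1 : (t₂.card:ℝ) ≤ ((t₂.card:ℝ)+1)^2 := by nlinarith [hc0]
      nlinarith [mul_le_mul_of_nonneg_left h1 (sq_nonneg (ε/3))]
    have h3 := Real.sqrt_le_sqrt hsq
    rwa [Real.sqrt_sq (norm_nonneg D), Real.sqrt_sq hε3.le] at h3
  -- final assembly
  refine ⟨φ, ?_, ?_, ?_, hφM⟩
  · rw [hφw]; exact hwn1
  · rw [hφw]; exact hwn2
  · have hfin : J φ - z • φ = η + D := by rw [hDdef]; abel
    rw [hfin]
    calc ‖η + D‖ ≤ ‖η‖ + ‖D‖ := norm_add_le _ _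
      _ ≤ 2*(ε/3) + ε/3 := by
          rw [hηAz]
          exact add_le_add hAzw hD3
      _ = ε := by ring


lemma main_final
    (J : lp (fun _ : ℕ => ℂ) 2 →L[ℂ] lp (fun _ : ℕ => ℂ) 2)
    {z : ℂ}
    (hcons : ∀ ε : ℝ, 0 < ε → ∀ M : ℕ, ∃ φ : lp (fun _ : ℕ => ℂ) 2,
      1/2 ≤ ‖φ‖ ∧ ‖φ‖ ≤ 2 ∧ ‖J φ - z • φ‖ ≤ ε ∧ ∀ k < M, φ k = 0) :
    z ∈ essSpec J := by
  rw [essSpec, Set.mem_iInter]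
  rintro ⟨Kc, hKc⟩
  show z ∈ spectrum ℂ (J + Kc)
  by_contra hznot
  rw [spectrum.notMem_iff] at hznot
  obtain ⟨V, hV⟩ := hznot
  set C : ℝ := ‖(↑V⁻¹ : lp (fun _ : ℕ => ℂ) 2 →L[ℂ] lp (fun _ : ℕ => ℂ) 2)‖ with hCdef
  have hC0 : 0 ≤ C := norm_nonneg _
  have hbound : ∀ x : lp (fun _ : ℕ => ℂ) 2,
      ‖x‖ ≤ C * ‖(algebraMap ℂ _ z - (J + Kc)) x‖ := by
    intro x
    have h2 : (↑(V⁻¹ * V) : lp (fun _ : ℕ => ℂ) 2 →L[ℂ] lp (fun _ : ℕ => ℂ) 2) = 1 := by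
      norm_num
    have h1 : (↑V⁻¹ : lp (fun _ : ℕ => ℂ) 2 →L[ℂ] lp (fun _ : ℕ => ℂ) 2)
        ((algebraMap ℂ _ z - (J + Kc)) x) = x := by
      rw [← hV]
      have h3 := congrArg (fun T : lp (fun _ : ℕ => ℂ) 2 →L[ℂ] lp (fun _ : ℕ => ℂ) 2 => T x) h2
      simp only [Units.val_mul, ContinuousLinearMap.mul_apply,
        ContinuousLinearMap.one_apply] at h3
      exact h3
    have h4 := ContinuousLinearMap.le_opNorm
      (↑V⁻¹ : lp (fun _ : ℕ => ℂ) 2 →L[ℂ] lp (fun _ : ℕ => ℂ) 2)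
      ((algebraMap ℂ _ z - (J + Kc)) x)
    rw [h1] at h4
    exact h4
  choose φ hn1 hn2 hn3 hn4 using fun m : ℕ =>
    hcons (1/((m:ℝ)+1)) (by positivity) m
  have hwk : ∀ v, Tendsto (fun m => ⟪v, φ m⟫_ℂ) atTop (nhds 0) :=
    fun v => weak_zero φ hn2 (fun m k hk => hn4 m k hk) v
  obtain ⟨S, hScomp, hSmem⟩ := hKc
  rw [Metric.mem_nhds_iff] at hSmem
  obtain ⟨r, hr, hball⟩ := hSmem
  set c₀ : ℂ := ((r/3 : ℝ) : ℂ) with hc₀def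
  have hc₀n : ‖c₀‖ = r/3 := by
    rw [hc₀def, Complex.norm_real, Real.norm_eq_abs, abs_of_pos (by linarith)]
  have hmem : ∀ m, Kc (c₀ • φ m) ∈ S := by
    intro m
    apply hball
    rw [Metric.mem_ball, dist_zero_right, norm_smul, hc₀n]
    have := hn2 m
    nlinarith [hr]
  obtain ⟨x0, hx0S, g, hgmono, hgtend⟩ := hScomp.tendsto_subseq hmem
  have hx00 : x0 = 0 := by
    have ha : Tendsto (fun k => ⟪x0, Kc (c₀ • φ (g k))⟫_ℂ) atTop (nhds ⟪x0, x0⟫_ℂ) :=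
      tendsto_const_nhds.inner hgtend
    have hb : Tendsto (fun k => ⟪x0, Kc (c₀ • φ (g k))⟫_ℂ) atTop (nhds 0) := by
      have hb1 : ∀ m, ⟪x0, Kc (c₀ • φ m)⟫_ℂ
          = c₀ * ⟪(ContinuousLinearMap.adjoint Kc) x0, φ m⟫_ℂ := by
        intro m
        rw [← ContinuousLinearMap.adjoint_inner_left, inner_smul_right]
      have hb2 : Tendsto (fun m => c₀ * ⟪(ContinuousLinearMap.adjoint Kc) x0, φ m⟫_ℂ)
          atTop (nhds 0) := by
        simpa using (hwk ((ContinuousLinearMap.adjoint Kc) x0)).const_mul c₀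
      exact (hb2.comp hgmono.tendsto_atTop).congr (fun k => (hb1 (g k)).symm)
    have := tendsto_nhds_unique ha hb
    exact inner_self_eq_zero.mp this
  rw [hx00] at hgtend
  have hKφ : Tendsto (fun k => ‖Kc (φ (g k))‖) atTop (nhds 0) := by
    have hc₀0 : c₀ ≠ 0 := by
      rw [hc₀def]
      exact_mod_cast (by positivity : (r/3 : ℝ) ≠ 0)
    have he : ∀ m, ‖Kc (φ m)‖ = ‖c₀‖⁻¹ * ‖Kc (c₀ • φ m)‖ := by
      intro m
      rw [map_smul, norm_smul, ← mul_assoc, inv_mul_cancel₀ (norm_ne_zero_iff.mpr hc₀0), one_mul]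
    have := (hgtend.norm.const_mul (‖c₀‖⁻¹))
    simp only [norm_zero, mul_zero] at this
    exact this.congr (fun k => (he (g k)).symm)
  have ht1 : Tendsto (fun k => 1/((g k : ℝ)+1)) atTop (nhds 0) :=
    tendsto_one_div_add_atTop_nhds_zero_nat.comp hgmono.tendsto_atTop
  have hfin : Tendsto (fun k => C * (1/((g k : ℝ)+1) + ‖Kc (φ (g k))‖)) atTop (nhds 0) := by
    simpa using ((ht1.add hKφ).const_mul C)
  have hev : ∀ᶠ k in atTop, C * (1/((g k : ℝ)+1) + ‖Kc (φ (g k))‖) < 1/2 :=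
    hfin.eventually_lt_const (by norm_num)
  obtain ⟨k, hk⟩ := hev.exists
  set m := g k with hmdef
  have hexp : (algebraMap ℂ _ z - (J + Kc)) (φ m) = (z • φ m - J (φ m)) - Kc (φ m) := by
    simp [ContinuousLinearMap.sub_apply, ContinuousLinearMap.add_apply,
      Algebra.algebraMap_eq_smul_one, ContinuousLinearMap.smul_apply,
      ContinuousLinearMap.one_apply]
    abel
  have hnb : ‖(algebraMap ℂ _ z - (J + Kc)) (φ m)‖ ≤ 1/((m:ℝ)+1) + ‖Kc (φ m)‖ := by
    rw [hexp]
    calc ‖(z • φ m - J (φ m)) - Kc (φ m)‖ ≤ ‖z • φ m - J (φ m)‖ + ‖Kc (φ m)‖ :=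
          norm_sub_le _ _
      _ ≤ 1/((m:ℝ)+1) + ‖Kc (φ m)‖ := by
          rw [norm_sub_rev]
          exact add_le_add (hn3 m) le_rfl
  have hfinal := (hbound (φ m)).trans
    (mul_le_mul_of_nonneg_left hnb hC0)
  have := hn1 m
  linarith [hk, this, hfinal]


/-- **(Last–Simon, Proposition 1.5.)**  If `J^{(r)}` is a right limit of a bounded self-adjoint
Jacobi matrix `J` with `sup|b_n| + sup|a_n| + sup|a_n|⁻¹ ≤ K`, then `σ(J^{(r)}) ⊆ σ_ess(J)`. -/
theorem stmt8 (a b : ℕ → ℝ) (K : ℝ) (ha : ∀ n, 0 < a n)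
    (hK : ∀ n, |b n| + |a n| + (a n)⁻¹ ≤ K)
    (ar br : ℤ → ℝ) (hlim : IsRightLimit a b ar br)
    (J : lp (fun _ : ℕ => ℂ) 2 →L[ℂ] lp (fun _ : ℕ => ℂ) 2)
    (hJsa : IsSelfAdjoint J)
    (hJ : ∀ n m, ⟪deltaN n, J (deltaN m)⟫_ℂ = jacEntryN a b n m)
    (Jr : lp (fun _ : ℤ => ℂ) 2 →L[ℂ] lp (fun _ : ℤ => ℂ) 2)
    (hJrsa : IsSelfAdjoint Jr)
    (hJr : ∀ n m, ⟪deltaZ n, Jr (deltaZ m)⟫_ℂ = jacEntryZ ar br n m) :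
    spectrum ℂ Jr ⊆ essSpec J := by
  intro z hz
  exact main_final J (construct a b ar br hlim J hJ Jr hJrsa hJr hz)
end

section
/- Let x₁, x₂ ∈ ℝ be distinct and let (ã_n)_{n∈ℤ}, (b̃_n)_{n∈ℤ} be real sequences with ã_n ≥ 0. Then the three conditions (i) ã_n ã_{n+1} = 0 for all n, (ii) ã_n = ã_{n−1} = 0 ⟹ b̃_n ∈ {x₁, x₂}, (iii) ã_n ≠ 0 ⟹ (b̃_n + b̃_{n+1} = x₁ + x₂ and b̃_n b̃_{n+1} − ã_n² = x₁x₂), hold if and only if for all n: ã_n² + ã_{n-1}² + (b̃_n − x₁)(b̃_n − x₂) = 0, ã_n(b̃_n + b̃_{n+1} − x₁ − x₂) = 0, and ã_n ã_{n+1} = 0. -/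
/-!
A two-sided Jacobi matrix with `a n * a (n + 1) = 0` is a direct sum of `1 × 1` blocks `(b n)` and
`2 × 2` blocks `[[b n, a n], [a n, b (n + 1)]]` with `a n ≠ 0`. For a `2 × 2` block with trace
`x₁ + x₂`, the determinant condition `b n * b (n + 1) - a n ^ 2 = x₁ * x₂` is equivalent to the
vanishing of either diagonal entry of `(J - x₁)(J - x₂)`, which is how both directions go.
-/

section Blocks

variable {R : Type*} [CommRing R] {x₁ x₂ a s t : R}

theorem mul_sub_sq_eq_mul_iff_left (h : s + t = x₁ + x₂) :
    s * t - a ^ 2 = x₁ * x₂ ↔ a ^ 2 + (s - x₁) * (s - x₂) = 0 := by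
  constructor <;> intro h' <;> linear_combination s * h - h'

theorem mul_sub_sq_eq_mul_iff_right (h : s + t = x₁ + x₂) :
    s * t - a ^ 2 = x₁ * x₂ ↔ a ^ 2 + (t - x₁) * (t - x₂) = 0 := by
  rw [mul_comm s t]
  exact mul_sub_sq_eq_mul_iff_left (by rwa [add_comm])

end Blocks

section JacobiParameters

variable {R : Type*} [CommRing R] {x₁ x₂ : R} {a b : ℤ → R} {n : ℤ}

theorem offDiag_eq_zero_of_trace_eq (hsum : a n ≠ 0 → b n + b (n + 1) = x₁ + x₂) :
    a n * (b n + b (n + 1) - x₁ - x₂) = 0 := by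
  by_cases hn : a n = 0
  · rw [hn, zero_mul]
  · rw [sub_sub, hsum hn, sub_self, mul_zero]

variable [NoZeroDivisors R]

theorem diag_eq_zero_of_blocks (hprod : ∀ n, a n * a (n + 1) = 0)
    (hsingle : ∀ n, a n = 0 → a (n - 1) = 0 → b n = x₁ ∨ b n = x₂)
    (hblock : ∀ n, a n ≠ 0 → b n + b (n + 1) = x₁ + x₂ ∧ b n * b (n + 1) - a n ^ 2 = x₁ * x₂) :
    a n ^ 2 + a (n - 1) ^ 2 + (b n - x₁) * (b n - x₂) = 0 := by
  have hprev : a (n - 1) * a n = 0 := by simpa using hprod (n - 1)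
  by_cases hn : a n = 0
  · rw [hn, zero_pow two_ne_zero, zero_add]
    by_cases hm : a (n - 1) = 0
    · rcases hsingle n hn hm with hb | hb <;> simp [hm, hb]
    · obtain ⟨hsum, hdet⟩ := hblock (n - 1) hm
      rw [sub_add_cancel] at hsum hdet
      exact (mul_sub_sq_eq_mul_iff_right hsum).1 hdet
  · obtain ⟨hsum, hdet⟩ := hblock n hn
    rw [eq_zero_of_ne_zero_of_mul_right_eq_zero hn hprev, zero_pow two_ne_zero, add_zero]
    exact (mul_sub_sq_eq_mul_iff_left hsum).1 hdet

theorem eq_or_eq_of_diag_eq_zero (hdiag : a n ^ 2 + a (n - 1) ^ 2 + (b n - x₁) * (b n - x₂) = 0)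
    (hn : a n = 0) (hm : a (n - 1) = 0) : b n = x₁ ∨ b n = x₂ := by
  simpa [hn, hm, sub_eq_zero] using hdiag

theorem block_of_entries_eq_zero
    (hdiag : a (n + 1) ^ 2 + a n ^ 2 + (b (n + 1) - x₁) * (b (n + 1) - x₂) = 0)
    (hoff : a n * (b n + b (n + 1) - x₁ - x₂) = 0) (hprod : a n * a (n + 1) = 0) (hn : a n ≠ 0) :
    b n + b (n + 1) = x₁ + x₂ ∧ b n * b (n + 1) - a n ^ 2 = x₁ * x₂ := by
  have hsum : b n + b (n + 1) = x₁ + x₂ := by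
    rw [← sub_eq_zero, ← sub_sub]
    exact eq_zero_of_ne_zero_of_mul_left_eq_zero hn hoff
  rw [eq_zero_of_ne_zero_of_mul_left_eq_zero hn hprod, zero_pow two_ne_zero, zero_add] at hdiag
  exact ⟨hsum, (mul_sub_sq_eq_mul_iff_right hsum).2 hdiag⟩

end JacobiParameters

theorem stmt14_general (x₁ x₂ : ℝ) (a b : ℤ → ℝ) :
    ((∀ n, a n * a (n + 1) = 0) ∧
     (∀ n, a n = 0 → a (n - 1) = 0 → b n = x₁ ∨ b n = x₂) ∧
     (∀ n, a n ≠ 0 →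
        b n + b (n + 1) = x₁ + x₂ ∧ b n * b (n + 1) - a n ^ 2 = x₁ * x₂)) ↔
    (∀ n, a n ^ 2 + a (n - 1) ^ 2 + (b n - x₁) * (b n - x₂) = 0 ∧
      a n * (b n + b (n + 1) - x₁ - x₂) = 0 ∧
      a n * a (n + 1) = 0) := by
  constructor
  · rintro ⟨hprod, hsingle, hblock⟩ n
    exact ⟨diag_eq_zero_of_blocks hprod hsingle hblock,
      offDiag_eq_zero_of_trace_eq fun hn => (hblock n hn).1, hprod n⟩
  · intro h
    refine ⟨fun n => (h n).2.2, fun n => eq_or_eq_of_diag_eq_zero (h n).1, fun n => ?_⟩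
    have hdiag := (h (n + 1)).1
    rw [add_sub_cancel_right] at hdiag
    exact block_of_entries_eq_zero hdiag (h n).2.1 (h n).2.2

/-- Equivalence of the block description (1×1 and 2×2 blocks with eigenvalues among `{x₁, x₂}`)
and the matrix-entry description of two-sided Jacobi parameters `(ã, b̃)` with
`(J̃ - x₁)(J̃ - x₂) = 0`. -/
theorem stmt14 (x₁ x₂ : ℝ) (hx : x₁ ≠ x₂) (a b : ℤ → ℝ) (ha : ∀ n, 0 ≤ a n) :
    ((∀ n, a n * a (n + 1) = 0) ∧
     (∀ n, a n = 0 → a (n - 1) = 0 → b n = x₁ ∨ b n = x₂) ∧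
     (∀ n, a n ≠ 0 →
        b n + b (n + 1) = x₁ + x₂ ∧ b n * b (n + 1) - a n ^ 2 = x₁ * x₂)) ↔
    (∀ n, a n ^ 2 + a (n - 1) ^ 2 + (b n - x₁) * (b n - x₂) = 0 ∧
      a n * (b n + b (n + 1) - x₁ - x₂) = 0 ∧
      a n * a (n + 1) = 0) :=
  stmt14_general x₁ x₂ a b
end
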